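/- arXiv:1807.01365 — 5 statements merged into one kernel-verified Lean document; each statement's English description precedes it below -/
import Mathlib

section
/- If Q is a sequence satisfying the Hofstadter Q-recurrence with initial condition Q(i) = i for 1 ≤ i ≤ N, where N ≥ 3, then Q(N+2) = N+1, Q(N+3) = N+2, and Q(N+4) = 5. -/
/-- Hofstadter Q-recurrence with Q(i)=i for 1 ≤ i ≤ N, N ≥ 3:
Q(N+2)=N+1, Q(N+3)=N+2, Q(N+4)=5. -/
theorem stmt_1 (N : ℤ) (hN : 3 ≤ N) (Q : ℤ → ℤ)
    (hinit : ∀ i : ℤ, 1 ≤ i → i ≤ N → Q i = i)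
    (hrec : ∀ n : ℤ, N < n → 1 ≤ n - Q (n - 1) → 1 ≤ n - Q (n - 2) →
      Q n = Q (n - Q (n - 1)) + Q (n - Q (n - 2))) :
    Q (N + 2) = N + 1 ∧ Q (N + 3) = N + 2 ∧ Q (N + 4) = 5 := by
  have hQ1 : Q 1 = 1 := hinit 1 le_rfl (by linarith)
  have hQ2 : Q 2 = 2 := hinit 2 (by norm_num) (by linarith)
  have hQ3 : Q 3 = 3 := hinit 3 (by norm_num) hN
  have hQN : Q N = N := hinit N (by linarith) le_rfl
  have hQN1 : Q (N - 1) = N - 1 := hinit (N - 1) (by linarith) (by linarith)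
  have r1 := hrec (N + 1) (by linarith)
  rw [show N + 1 - 1 = N from by ring, show N + 1 - 2 = N - 1 from by ring,
    hQN, hQN1] at r1
  have h1 : Q (N + 1) = 3 := by
    rw [r1 (by linarith) (by linarith), show N + 1 - N = (1 : ℤ) from by ring,
      show N + 1 - (N - 1) = (2 : ℤ) from by ring, hQ1, hQ2]; norm_num
  have r2 := hrec (N + 2) (by linarith)
  rw [show N + 2 - 1 = N + 1 from by ring, show N + 2 - 2 = N from by ring,
    h1, hQN] at r2
  have h2 : Q (N + 2) = N + 1 := by
    rw [r2 (by linarith) (by linarith), show N + 2 - 3 = N - 1 from by ring,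
      show N + 2 - N = (2 : ℤ) from by ring, hQN1, hQ2]; ring
  have r3 := hrec (N + 3) (by linarith)
  rw [show N + 3 - 1 = N + 2 from by ring, show N + 3 - 2 = N + 1 from by ring,
    h2, h1] at r3
  have h3 : Q (N + 3) = N + 2 := by
    rw [r3 (by linarith) (by linarith), show N + 3 - (N + 1) = (2 : ℤ) from by ring,
      show N + 3 - 3 = N from by ring, hQ2, hQN]; ring
  have r4 := hrec (N + 4) (by linarith)
  rw [show N + 4 - 1 = N + 3 from by ring, show N + 4 - 2 = N + 2 from by ring,
    h3, h2] at r4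
  have h4 : Q (N + 4) = 5 := by
    rw [r4 (by linarith) (by linarith), show N + 4 - (N + 2) = (2 : ℤ) from by ring,
      show N + 4 - (N + 1) = (3 : ℤ) from by ring, hQ2, hQ3]; norm_num
  exact ⟨h2, h3, h4⟩
end

section
/- If Q satisfies the Hofstadter Q-recurrence with initial condition Q(i) = i for 1 ≤ i ≤ N, where N ≥ 13, then Q(N+28) = 2N+8. -/
/-- Hofstadter Q-recurrence with Q(i)=i for 1 ≤ i ≤ N, N ≥ 13:
Q(N+28) = 2N+8. -/
theorem stmt_2 (N : ℤ) (hN : 13 ≤ N) (Q : ℤ → ℤ)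
    (hinit : ∀ i : ℤ, 1 ≤ i → i ≤ N → Q i = i)
    (hrec : ∀ n : ℤ, N < n → 1 ≤ n - Q (n - 1) → 1 ≤ n - Q (n - 2) →
      Q n = Q (n - Q (n - 1)) + Q (n - Q (n - 2))) :
    Q (N + 28) = 2 * N + 8 := by
  have h0 : Q N = N := hinit N (by linarith) le_rfl
  have hm1 : Q (N - 1) = N - 1 := hinit (N - 1) (by linarith) (by linarith)
  have h1 : Q (N + 1) = 3 := by
    have e1 : Q (N + 1 - 1) = N := by rw [show (N + 1 : ℤ) - 1 = N by ring]; exact h0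
    have e2 : Q (N + 1 - 2) = N - 1 := by rw [show (N + 1 : ℤ) - 2 = N - 1 by ring]; exact hm1
    have h := hrec (N + 1) (by linarith) (by rw [e1]; linarith) (by rw [e2]; linarith)
    rw [e1, e2, show (N + 1 : ℤ) - (N) = 1 by ring, show (N + 1 : ℤ) - (N - 1) = 2 by ring] at h
    rw [hinit 1 (by norm_num) (by linarith), hinit 2 (by norm_num) (by linarith)] at h
    linarith
  have h2 : Q (N + 2) = N + 1 := by
    have e1 : Q (N + 2 - 1) = 3 := by rw [show (N + 2 : ℤ) - 1 = N + 1 by ring]; exact h1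
    have e2 : Q (N + 2 - 2) = N := by rw [show (N + 2 : ℤ) - 2 = N by ring]; exact h0
    have h := hrec (N + 2) (by linarith) (by rw [e1]; linarith) (by rw [e2]; linarith)
    rw [e1, e2, show (N + 2 : ℤ) - (3) = N - 1 by ring, show (N + 2 : ℤ) - (N) = 2 by ring] at h
    rw [hinit (N - 1) (by linarith) (by linarith), hinit 2 (by norm_num) (by linarith)] at h
    linarith
  have h3 : Q (N + 3) = N + 2 := by
    have e1 : Q (N + 3 - 1) = N + 1 := by rw [show (N + 3 : ℤ) - 1 = N + 2 by ring]; exact h2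
    have e2 : Q (N + 3 - 2) = 3 := by rw [show (N + 3 : ℤ) - 2 = N + 1 by ring]; exact h1
    have h := hrec (N + 3) (by linarith) (by rw [e1]; linarith) (by rw [e2]; linarith)
    rw [e1, e2, show (N + 3 : ℤ) - (N + 1) = 2 by ring, show (N + 3 : ℤ) - (3) = N by ring] at h
    rw [hinit 2 (by norm_num) (by linarith), hinit (N) (by linarith) (by linarith)] at h
    linarith
  have h4 : Q (N + 4) = 5 := by
    have e1 : Q (N + 4 - 1) = N + 2 := by rw [show (N + 4 : ℤ) - 1 = N + 3 by ring]; exact h3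
    have e2 : Q (N + 4 - 2) = N + 1 := by rw [show (N + 4 : ℤ) - 2 = N + 2 by ring]; exact h2
    have h := hrec (N + 4) (by linarith) (by rw [e1]; linarith) (by rw [e2]; linarith)
    rw [e1, e2, show (N + 4 : ℤ) - (N + 2) = 2 by ring, show (N + 4 : ℤ) - (N + 1) = 3 by ring] at h
    rw [hinit 2 (by norm_num) (by linarith), hinit 3 (by norm_num) (by linarith)] at h
    linarith
  have h5 : Q (N + 5) = N + 3 := by
    have e1 : Q (N + 5 - 1) = 5 := by rw [show (N + 5 : ℤ) - 1 = N + 4 by ring]; exact h4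
    have e2 : Q (N + 5 - 2) = N + 2 := by rw [show (N + 5 : ℤ) - 2 = N + 3 by ring]; exact h3
    have h := hrec (N + 5) (by linarith) (by rw [e1]; linarith) (by rw [e2]; linarith)
    rw [e1, e2, show (N + 5 : ℤ) - (5) = N by ring, show (N + 5 : ℤ) - (N + 2) = 3 by ring] at h
    rw [hinit (N) (by linarith) (by linarith), hinit 3 (by norm_num) (by linarith)] at h
    linarith
  have h6 : Q (N + 6) = 6 := by
    have e1 : Q (N + 6 - 1) = N + 3 := by rw [show (N + 6 : ℤ) - 1 = N + 5 by ring]; exact h5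
    have e2 : Q (N + 6 - 2) = 5 := by rw [show (N + 6 : ℤ) - 2 = N + 4 by ring]; exact h4
    have h := hrec (N + 6) (by linarith) (by rw [e1]; linarith) (by rw [e2]; linarith)
    rw [e1, e2, show (N + 6 : ℤ) - (N + 3) = 3 by ring, show (N + 6 : ℤ) - (5) = N + 1 by ring] at h
    rw [hinit 3 (by norm_num) (by linarith), h1] at h
    linarith
  have h7 : Q (N + 7) = 7 := by
    have e1 : Q (N + 7 - 1) = 6 := by rw [show (N + 7 : ℤ) - 1 = N + 6 by ring]; exact h6
    have e2 : Q (N + 7 - 2) = N + 3 := by rw [show (N + 7 : ℤ) - 2 = N + 5 by ring]; exact h5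
    have h := hrec (N + 7) (by linarith) (by rw [e1]; linarith) (by rw [e2]; linarith)
    rw [e1, e2, show (N + 7 : ℤ) - (6) = N + 1 by ring, show (N + 7 : ℤ) - (N + 3) = 4 by ring] at h
    rw [h1, hinit 4 (by norm_num) (by linarith)] at h
    linarith
  have h8 : Q (N + 8) = N + 4 := by
    have e1 : Q (N + 8 - 1) = 7 := by rw [show (N + 8 : ℤ) - 1 = N + 7 by ring]; exact h7
    have e2 : Q (N + 8 - 2) = 6 := by rw [show (N + 8 : ℤ) - 2 = N + 6 by ring]; exact h6
    have h := hrec (N + 8) (by linarith) (by rw [e1]; linarith) (by rw [e2]; linarith)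
    rw [e1, e2, show (N + 8 : ℤ) - (7) = N + 1 by ring, show (N + 8 : ℤ) - (6) = N + 2 by ring] at h
    rw [h1, h2] at h
    linarith
  have h9 : Q (N + 9) = N + 6 := by
    have e1 : Q (N + 9 - 1) = N + 4 := by rw [show (N + 9 : ℤ) - 1 = N + 8 by ring]; exact h8
    have e2 : Q (N + 9 - 2) = 7 := by rw [show (N + 9 : ℤ) - 2 = N + 7 by ring]; exact h7
    have h := hrec (N + 9) (by linarith) (by rw [e1]; linarith) (by rw [e2]; linarith)
    rw [e1, e2, show (N + 9 : ℤ) - (N + 4) = 5 by ring, show (N + 9 : ℤ) - (7) = N + 2 by ring] at h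
    rw [hinit 5 (by norm_num) (by linarith), h2] at h
    linarith
  have h10 : Q (N + 10) = 10 := by
    have e1 : Q (N + 10 - 1) = N + 6 := by rw [show (N + 10 : ℤ) - 1 = N + 9 by ring]; exact h9
    have e2 : Q (N + 10 - 2) = N + 4 := by rw [show (N + 10 : ℤ) - 2 = N + 8 by ring]; exact h8
    have h := hrec (N + 10) (by linarith) (by rw [e1]; linarith) (by rw [e2]; linarith)
    rw [e1, e2, show (N + 10 : ℤ) - (N + 6) = 4 by ring, show (N + 10 : ℤ) - (N + 4) = 6 by ring] at h
    rw [hinit 4 (by norm_num) (by linarith), hinit 6 (by norm_num) (by linarith)] at h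
    linarith
  have h11 : Q (N + 11) = 8 := by
    have e1 : Q (N + 11 - 1) = 10 := by rw [show (N + 11 : ℤ) - 1 = N + 10 by ring]; exact h10
    have e2 : Q (N + 11 - 2) = N + 6 := by rw [show (N + 11 : ℤ) - 2 = N + 9 by ring]; exact h9
    have h := hrec (N + 11) (by linarith) (by rw [e1]; linarith) (by rw [e2]; linarith)
    rw [e1, e2, show (N + 11 : ℤ) - (10) = N + 1 by ring, show (N + 11 : ℤ) - (N + 6) = 5 by ring] at h
    rw [h1, hinit 5 (by norm_num) (by linarith)] at h
    linarith
  have h12 : Q (N + 12) = N + 6 := by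
    have e1 : Q (N + 12 - 1) = 8 := by rw [show (N + 12 : ℤ) - 1 = N + 11 by ring]; exact h11
    have e2 : Q (N + 12 - 2) = 10 := by rw [show (N + 12 : ℤ) - 2 = N + 10 by ring]; exact h10
    have h := hrec (N + 12) (by linarith) (by rw [e1]; linarith) (by rw [e2]; linarith)
    rw [e1, e2, show (N + 12 : ℤ) - (8) = N + 4 by ring, show (N + 12 : ℤ) - (10) = N + 2 by ring] at h
    rw [h4, h2] at h
    linarith
  have h13 : Q (N + 13) = N + 10 := by
    have e1 : Q (N + 13 - 1) = N + 6 := by rw [show (N + 13 : ℤ) - 1 = N + 12 by ring]; exact h12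
    have e2 : Q (N + 13 - 2) = 8 := by rw [show (N + 13 : ℤ) - 2 = N + 11 by ring]; exact h11
    have h := hrec (N + 13) (by linarith) (by rw [e1]; linarith) (by rw [e2]; linarith)
    rw [e1, e2, show (N + 13 : ℤ) - (N + 6) = 7 by ring, show (N + 13 : ℤ) - (8) = N + 5 by ring] at h
    rw [hinit 7 (by norm_num) (by linarith), h5] at h
    linarith
  have h14 : Q (N + 14) = 12 := by
    have e1 : Q (N + 14 - 1) = N + 10 := by rw [show (N + 14 : ℤ) - 1 = N + 13 by ring]; exact h13
    have e2 : Q (N + 14 - 2) = N + 6 := by rw [show (N + 14 : ℤ) - 2 = N + 12 by ring]; exact h12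
    have h := hrec (N + 14) (by linarith) (by rw [e1]; linarith) (by rw [e2]; linarith)
    rw [e1, e2, show (N + 14 : ℤ) - (N + 10) = 4 by ring, show (N + 14 : ℤ) - (N + 6) = 8 by ring] at h
    rw [hinit 4 (by norm_num) (by linarith), hinit 8 (by norm_num) (by linarith)] at h
    linarith
  have h15 : Q (N + 15) = N + 7 := by
    have e1 : Q (N + 15 - 1) = 12 := by rw [show (N + 15 : ℤ) - 1 = N + 14 by ring]; exact h14
    have e2 : Q (N + 15 - 2) = N + 10 := by rw [show (N + 15 : ℤ) - 2 = N + 13 by ring]; exact h13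
    have h := hrec (N + 15) (by linarith) (by rw [e1]; linarith) (by rw [e2]; linarith)
    rw [e1, e2, show (N + 15 : ℤ) - (12) = N + 3 by ring, show (N + 15 : ℤ) - (N + 10) = 5 by ring] at h
    rw [h3, hinit 5 (by norm_num) (by linarith)] at h
    linarith
  have h16 : Q (N + 16) = 14 := by
    have e1 : Q (N + 16 - 1) = N + 7 := by rw [show (N + 16 : ℤ) - 1 = N + 15 by ring]; exact h15
    have e2 : Q (N + 16 - 2) = 12 := by rw [show (N + 16 : ℤ) - 2 = N + 14 by ring]; exact h14
    have h := hrec (N + 16) (by linarith) (by rw [e1]; linarith) (by rw [e2]; linarith)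
    rw [e1, e2, show (N + 16 : ℤ) - (N + 7) = 9 by ring, show (N + 16 : ℤ) - (12) = N + 4 by ring] at h
    rw [hinit 9 (by norm_num) (by linarith), h4] at h
    linarith
  have h17 : Q (N + 17) = N + 12 := by
    have e1 : Q (N + 17 - 1) = 14 := by rw [show (N + 17 : ℤ) - 1 = N + 16 by ring]; exact h16
    have e2 : Q (N + 17 - 2) = N + 7 := by rw [show (N + 17 : ℤ) - 2 = N + 15 by ring]; exact h15
    have h := hrec (N + 17) (by linarith) (by rw [e1]; linarith) (by rw [e2]; linarith)
    rw [e1, e2, show (N + 17 : ℤ) - (14) = N + 3 by ring, show (N + 17 : ℤ) - (N + 7) = 10 by ring] at h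
    rw [h3, hinit 10 (by norm_num) (by linarith)] at h
    linarith
  have h18 : Q (N + 18) = 11 := by
    have e1 : Q (N + 18 - 1) = N + 12 := by rw [show (N + 18 : ℤ) - 1 = N + 17 by ring]; exact h17
    have e2 : Q (N + 18 - 2) = 14 := by rw [show (N + 18 : ℤ) - 2 = N + 16 by ring]; exact h16
    have h := hrec (N + 18) (by linarith) (by rw [e1]; linarith) (by rw [e2]; linarith)
    rw [e1, e2, show (N + 18 : ℤ) - (N + 12) = 6 by ring, show (N + 18 : ℤ) - (14) = N + 4 by ring] at h
    rw [hinit 6 (by norm_num) (by linarith), h4] at h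
    linarith
  have h19 : Q (N + 19) = N + 11 := by
    have e1 : Q (N + 19 - 1) = 11 := by rw [show (N + 19 : ℤ) - 1 = N + 18 by ring]; exact h18
    have e2 : Q (N + 19 - 2) = N + 12 := by rw [show (N + 19 : ℤ) - 2 = N + 17 by ring]; exact h17
    have h := hrec (N + 19) (by linarith) (by rw [e1]; linarith) (by rw [e2]; linarith)
    rw [e1, e2, show (N + 19 : ℤ) - (11) = N + 8 by ring, show (N + 19 : ℤ) - (N + 12) = 7 by ring] at h
    rw [h8, hinit 7 (by norm_num) (by linarith)] at h
    linarith
  have h20 : Q (N + 20) = N + 15 := by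
    have e1 : Q (N + 20 - 1) = N + 11 := by rw [show (N + 20 : ℤ) - 1 = N + 19 by ring]; exact h19
    have e2 : Q (N + 20 - 2) = 11 := by rw [show (N + 20 : ℤ) - 2 = N + 18 by ring]; exact h18
    have h := hrec (N + 20) (by linarith) (by rw [e1]; linarith) (by rw [e2]; linarith)
    rw [e1, e2, show (N + 20 : ℤ) - (N + 11) = 9 by ring, show (N + 20 : ℤ) - (11) = N + 9 by ring] at h
    rw [hinit 9 (by norm_num) (by linarith), h9] at h
    linarith
  have h21 : Q (N + 21) = 16 := by
    have e1 : Q (N + 21 - 1) = N + 15 := by rw [show (N + 21 : ℤ) - 1 = N + 20 by ring]; exact h20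
    have e2 : Q (N + 21 - 2) = N + 11 := by rw [show (N + 21 : ℤ) - 2 = N + 19 by ring]; exact h19
    have h := hrec (N + 21) (by linarith) (by rw [e1]; linarith) (by rw [e2]; linarith)
    rw [e1, e2, show (N + 21 : ℤ) - (N + 15) = 6 by ring, show (N + 21 : ℤ) - (N + 11) = 10 by ring] at h
    rw [hinit 6 (by norm_num) (by linarith), hinit 10 (by norm_num) (by linarith)] at h
    linarith
  have h22 : Q (N + 22) = 13 := by
    have e1 : Q (N + 22 - 1) = 16 := by rw [show (N + 22 : ℤ) - 1 = N + 21 by ring]; exact h21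
    have e2 : Q (N + 22 - 2) = N + 15 := by rw [show (N + 22 : ℤ) - 2 = N + 20 by ring]; exact h20
    have h := hrec (N + 22) (by linarith) (by rw [e1]; linarith) (by rw [e2]; linarith)
    rw [e1, e2, show (N + 22 : ℤ) - (16) = N + 6 by ring, show (N + 22 : ℤ) - (N + 15) = 7 by ring] at h
    rw [h6, hinit 7 (by norm_num) (by linarith)] at h
    linarith
  have h23 : Q (N + 23) = 17 := by
    have e1 : Q (N + 23 - 1) = 13 := by rw [show (N + 23 : ℤ) - 1 = N + 22 by ring]; exact h22
    have e2 : Q (N + 23 - 2) = 16 := by rw [show (N + 23 : ℤ) - 2 = N + 21 by ring]; exact h21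
    have h := hrec (N + 23) (by linarith) (by rw [e1]; linarith) (by rw [e2]; linarith)
    rw [e1, e2, show (N + 23 : ℤ) - (13) = N + 10 by ring, show (N + 23 : ℤ) - (16) = N + 7 by ring] at h
    rw [h10, h7] at h
    linarith
  have h24 : Q (N + 24) = 15 := by
    have e1 : Q (N + 24 - 1) = 17 := by rw [show (N + 24 : ℤ) - 1 = N + 23 by ring]; exact h23
    have e2 : Q (N + 24 - 2) = 13 := by rw [show (N + 24 : ℤ) - 2 = N + 22 by ring]; exact h22
    have h := hrec (N + 24) (by linarith) (by rw [e1]; linarith) (by rw [e2]; linarith)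
    rw [e1, e2, show (N + 24 : ℤ) - (17) = N + 7 by ring, show (N + 24 : ℤ) - (13) = N + 11 by ring] at h
    rw [h7, h11] at h
    linarith
  have h25 : Q (N + 25) = N + 14 := by
    have e1 : Q (N + 25 - 1) = 15 := by rw [show (N + 25 : ℤ) - 1 = N + 24 by ring]; exact h24
    have e2 : Q (N + 25 - 2) = 17 := by rw [show (N + 25 : ℤ) - 2 = N + 23 by ring]; exact h23
    have h := hrec (N + 25) (by linarith) (by rw [e1]; linarith) (by rw [e2]; linarith)
    rw [e1, e2, show (N + 25 : ℤ) - (15) = N + 10 by ring, show (N + 25 : ℤ) - (17) = N + 8 by ring] at h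
    rw [h10, h8] at h
    linarith
  have h26 : Q (N + 26) = 20 := by
    have e1 : Q (N + 26 - 1) = N + 14 := by rw [show (N + 26 : ℤ) - 1 = N + 25 by ring]; exact h25
    have e2 : Q (N + 26 - 2) = 15 := by rw [show (N + 26 : ℤ) - 2 = N + 24 by ring]; exact h24
    have h := hrec (N + 26) (by linarith) (by rw [e1]; linarith) (by rw [e2]; linarith)
    rw [e1, e2, show (N + 26 : ℤ) - (N + 14) = 12 by ring, show (N + 26 : ℤ) - (15) = N + 11 by ring] at h
    rw [hinit 12 (by norm_num) (by linarith), h11] at h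
    linarith
  have h27 : Q (N + 27) = 20 := by
    have e1 : Q (N + 27 - 1) = 20 := by rw [show (N + 27 : ℤ) - 1 = N + 26 by ring]; exact h26
    have e2 : Q (N + 27 - 2) = N + 14 := by rw [show (N + 27 : ℤ) - 2 = N + 25 by ring]; exact h25
    have h := hrec (N + 27) (by linarith) (by rw [e1]; linarith) (by rw [e2]; linarith)
    rw [e1, e2, show (N + 27 : ℤ) - (20) = N + 7 by ring, show (N + 27 : ℤ) - (N + 14) = 13 by ring] at h
    rw [h7, hinit 13 (by norm_num) (by linarith)] at h
    linarith
  have h28 : Q (N + 28) = 2 * N + 8 := by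
    have e1 : Q (N + 28 - 1) = 20 := by rw [show (N + 28 : ℤ) - 1 = N + 27 by ring]; exact h27
    have e2 : Q (N + 28 - 2) = 20 := by rw [show (N + 28 : ℤ) - 2 = N + 26 by ring]; exact h26
    have h := hrec (N + 28) (by linarith) (by rw [e1]; linarith) (by rw [e2]; linarith)
    rw [e1, e2, show (N + 28 : ℤ) - (20) = N + 8 by ring] at h
    rw [h8] at h
    linarith
  linarith [h28]
end

section
/- Let N ≥ 21. If Q satisfies the Hofstadter Q-recurrence with initial condition Q(i) = i for 1 ≤ i ≤ N, then the computation of Q(N+29) requires the value of Q at a nonpositive index; specifically, N+29 - Q(N+28) = 21 - N ≤ 0. Hence the sequence Q_N dies after exactly N+28 terms. -/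
/-- For N ≥ 21, the sequence Q_N dies at index N+29:
N+29 - Q(N+28) = 21 - N ≤ 0. -/
theorem stmt_3 (N : ℤ) (hN : 21 ≤ N) (Q : ℤ → ℤ)
    (hinit : ∀ i : ℤ, 1 ≤ i → i ≤ N → Q i = i)
    (hrec : ∀ n : ℤ, N < n → 1 ≤ n - Q (n - 1) → 1 ≤ n - Q (n - 2) →
      Q n = Q (n - Q (n - 1)) + Q (n - Q (n - 2))) :
    (N + 29) - Q (N + 28) = 21 - N ∧ 21 - N ≤ 0 := by
  have hQ1 : Q (N + 1) = (3 : ℤ) := by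
    have hr := hrec (N + 1) (by linarith)
      (by rw [show (N:ℤ) + 1 - 1 = N from by ring, (hinit (N) (by linarith) (by linarith))]; linarith)
      (by rw [show (N:ℤ) + 1 - 2 = N - 1 from by ring, (hinit (N - 1) (by linarith) (by linarith))]; linarith)
    rw [show (N:ℤ) + 1 - 1 = N from by ring, (hinit (N) (by linarith) (by linarith)), show (N:ℤ) + 1 - 2 = N - 1 from by ring, (hinit (N - 1) (by linarith) (by linarith)), show (N:ℤ) + 1 - (N) = (1 : ℤ) from by ring, show (N:ℤ) + 1 - (N - 1) = (2 : ℤ) from by ring, (hinit (1 : ℤ) (by norm_num) (by linarith)), (hinit (2 : ℤ) (by norm_num) (by linarith))] at hr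
    linarith [hr]
  have hQ2 : Q (N + 2) = N + 1 := by
    have hr := hrec (N + 2) (by linarith)
      (by rw [show (N:ℤ) + 2 - 1 = N + 1 from by ring, hQ1]; linarith)
      (by rw [show (N:ℤ) + 2 - 2 = N from by ring, (hinit (N) (by linarith) (by linarith))]; linarith)
    rw [show (N:ℤ) + 2 - 1 = N + 1 from by ring, hQ1, show (N:ℤ) + 2 - 2 = N from by ring, (hinit (N) (by linarith) (by linarith)), show (N:ℤ) + 2 - ((3 : ℤ)) = N - 1 from by ring, show (N:ℤ) + 2 - (N) = (2 : ℤ) from by ring, (hinit (N - 1) (by linarith) (by linarith)), (hinit (2 : ℤ) (by norm_num) (by linarith))] at hr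
    linarith [hr]
  have hQ3 : Q (N + 3) = N + 2 := by
    have hr := hrec (N + 3) (by linarith)
      (by rw [show (N:ℤ) + 3 - 1 = N + 2 from by ring, hQ2]; linarith)
      (by rw [show (N:ℤ) + 3 - 2 = N + 1 from by ring, hQ1]; linarith)
    rw [show (N:ℤ) + 3 - 1 = N + 2 from by ring, hQ2, show (N:ℤ) + 3 - 2 = N + 1 from by ring, hQ1, show (N:ℤ) + 3 - (N + 1) = (2 : ℤ) from by ring, show (N:ℤ) + 3 - ((3 : ℤ)) = N from by ring, (hinit (2 : ℤ) (by norm_num) (by linarith)), (hinit (N) (by linarith) (by linarith))] at hr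
    linarith [hr]
  have hQ4 : Q (N + 4) = (5 : ℤ) := by
    have hr := hrec (N + 4) (by linarith)
      (by rw [show (N:ℤ) + 4 - 1 = N + 3 from by ring, hQ3]; linarith)
      (by rw [show (N:ℤ) + 4 - 2 = N + 2 from by ring, hQ2]; linarith)
    rw [show (N:ℤ) + 4 - 1 = N + 3 from by ring, hQ3, show (N:ℤ) + 4 - 2 = N + 2 from by ring, hQ2, show (N:ℤ) + 4 - (N + 2) = (2 : ℤ) from by ring, show (N:ℤ) + 4 - (N + 1) = (3 : ℤ) from by ring, (hinit (2 : ℤ) (by norm_num) (by linarith)), (hinit (3 : ℤ) (by norm_num) (by linarith))] at hr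
    linarith [hr]
  have hQ5 : Q (N + 5) = N + 3 := by
    have hr := hrec (N + 5) (by linarith)
      (by rw [show (N:ℤ) + 5 - 1 = N + 4 from by ring, hQ4]; linarith)
      (by rw [show (N:ℤ) + 5 - 2 = N + 3 from by ring, hQ3]; linarith)
    rw [show (N:ℤ) + 5 - 1 = N + 4 from by ring, hQ4, show (N:ℤ) + 5 - 2 = N + 3 from by ring, hQ3, show (N:ℤ) + 5 - ((5 : ℤ)) = N from by ring, show (N:ℤ) + 5 - (N + 2) = (3 : ℤ) from by ring, (hinit (N) (by linarith) (by linarith)), (hinit (3 : ℤ) (by norm_num) (by linarith))] at hr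
    linarith [hr]
  have hQ6 : Q (N + 6) = (6 : ℤ) := by
    have hr := hrec (N + 6) (by linarith)
      (by rw [show (N:ℤ) + 6 - 1 = N + 5 from by ring, hQ5]; linarith)
      (by rw [show (N:ℤ) + 6 - 2 = N + 4 from by ring, hQ4]; linarith)
    rw [show (N:ℤ) + 6 - 1 = N + 5 from by ring, hQ5, show (N:ℤ) + 6 - 2 = N + 4 from by ring, hQ4, show (N:ℤ) + 6 - (N + 3) = (3 : ℤ) from by ring, show (N:ℤ) + 6 - ((5 : ℤ)) = N + 1 from by ring, (hinit (3 : ℤ) (by norm_num) (by linarith)), hQ1] at hr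
    linarith [hr]
  have hQ7 : Q (N + 7) = (7 : ℤ) := by
    have hr := hrec (N + 7) (by linarith)
      (by rw [show (N:ℤ) + 7 - 1 = N + 6 from by ring, hQ6]; linarith)
      (by rw [show (N:ℤ) + 7 - 2 = N + 5 from by ring, hQ5]; linarith)
    rw [show (N:ℤ) + 7 - 1 = N + 6 from by ring, hQ6, show (N:ℤ) + 7 - 2 = N + 5 from by ring, hQ5, show (N:ℤ) + 7 - ((6 : ℤ)) = N + 1 from by ring, show (N:ℤ) + 7 - (N + 3) = (4 : ℤ) from by ring, hQ1, (hinit (4 : ℤ) (by norm_num) (by linarith))] at hr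
    linarith [hr]
  have hQ8 : Q (N + 8) = N + 4 := by
    have hr := hrec (N + 8) (by linarith)
      (by rw [show (N:ℤ) + 8 - 1 = N + 7 from by ring, hQ7]; linarith)
      (by rw [show (N:ℤ) + 8 - 2 = N + 6 from by ring, hQ6]; linarith)
    rw [show (N:ℤ) + 8 - 1 = N + 7 from by ring, hQ7, show (N:ℤ) + 8 - 2 = N + 6 from by ring, hQ6, show (N:ℤ) + 8 - ((7 : ℤ)) = N + 1 from by ring, show (N:ℤ) + 8 - ((6 : ℤ)) = N + 2 from by ring, hQ1, hQ2] at hr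
    linarith [hr]
  have hQ9 : Q (N + 9) = N + 6 := by
    have hr := hrec (N + 9) (by linarith)
      (by rw [show (N:ℤ) + 9 - 1 = N + 8 from by ring, hQ8]; linarith)
      (by rw [show (N:ℤ) + 9 - 2 = N + 7 from by ring, hQ7]; linarith)
    rw [show (N:ℤ) + 9 - 1 = N + 8 from by ring, hQ8, show (N:ℤ) + 9 - 2 = N + 7 from by ring, hQ7, show (N:ℤ) + 9 - (N + 4) = (5 : ℤ) from by ring, show (N:ℤ) + 9 - ((7 : ℤ)) = N + 2 from by ring, (hinit (5 : ℤ) (by norm_num) (by linarith)), hQ2] at hr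
    linarith [hr]
  have hQ10 : Q (N + 10) = (10 : ℤ) := by
    have hr := hrec (N + 10) (by linarith)
      (by rw [show (N:ℤ) + 10 - 1 = N + 9 from by ring, hQ9]; linarith)
      (by rw [show (N:ℤ) + 10 - 2 = N + 8 from by ring, hQ8]; linarith)
    rw [show (N:ℤ) + 10 - 1 = N + 9 from by ring, hQ9, show (N:ℤ) + 10 - 2 = N + 8 from by ring, hQ8, show (N:ℤ) + 10 - (N + 6) = (4 : ℤ) from by ring, show (N:ℤ) + 10 - (N + 4) = (6 : ℤ) from by ring, (hinit (4 : ℤ) (by norm_num) (by linarith)), (hinit (6 : ℤ) (by norm_num) (by linarith))] at hr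
    linarith [hr]
  have hQ11 : Q (N + 11) = (8 : ℤ) := by
    have hr := hrec (N + 11) (by linarith)
      (by rw [show (N:ℤ) + 11 - 1 = N + 10 from by ring, hQ10]; linarith)
      (by rw [show (N:ℤ) + 11 - 2 = N + 9 from by ring, hQ9]; linarith)
    rw [show (N:ℤ) + 11 - 1 = N + 10 from by ring, hQ10, show (N:ℤ) + 11 - 2 = N + 9 from by ring, hQ9, show (N:ℤ) + 11 - ((10 : ℤ)) = N + 1 from by ring, show (N:ℤ) + 11 - (N + 6) = (5 : ℤ) from by ring, hQ1, (hinit (5 : ℤ) (by norm_num) (by linarith))] at hr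
    linarith [hr]
  have hQ12 : Q (N + 12) = N + 6 := by
    have hr := hrec (N + 12) (by linarith)
      (by rw [show (N:ℤ) + 12 - 1 = N + 11 from by ring, hQ11]; linarith)
      (by rw [show (N:ℤ) + 12 - 2 = N + 10 from by ring, hQ10]; linarith)
    rw [show (N:ℤ) + 12 - 1 = N + 11 from by ring, hQ11, show (N:ℤ) + 12 - 2 = N + 10 from by ring, hQ10, show (N:ℤ) + 12 - ((8 : ℤ)) = N + 4 from by ring, show (N:ℤ) + 12 - ((10 : ℤ)) = N + 2 from by ring, hQ4, hQ2] at hr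
    linarith [hr]
  have hQ13 : Q (N + 13) = N + 10 := by
    have hr := hrec (N + 13) (by linarith)
      (by rw [show (N:ℤ) + 13 - 1 = N + 12 from by ring, hQ12]; linarith)
      (by rw [show (N:ℤ) + 13 - 2 = N + 11 from by ring, hQ11]; linarith)
    rw [show (N:ℤ) + 13 - 1 = N + 12 from by ring, hQ12, show (N:ℤ) + 13 - 2 = N + 11 from by ring, hQ11, show (N:ℤ) + 13 - (N + 6) = (7 : ℤ) from by ring, show (N:ℤ) + 13 - ((8 : ℤ)) = N + 5 from by ring, (hinit (7 : ℤ) (by norm_num) (by linarith)), hQ5] at hr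
    linarith [hr]
  have hQ14 : Q (N + 14) = (12 : ℤ) := by
    have hr := hrec (N + 14) (by linarith)
      (by rw [show (N:ℤ) + 14 - 1 = N + 13 from by ring, hQ13]; linarith)
      (by rw [show (N:ℤ) + 14 - 2 = N + 12 from by ring, hQ12]; linarith)
    rw [show (N:ℤ) + 14 - 1 = N + 13 from by ring, hQ13, show (N:ℤ) + 14 - 2 = N + 12 from by ring, hQ12, show (N:ℤ) + 14 - (N + 10) = (4 : ℤ) from by ring, show (N:ℤ) + 14 - (N + 6) = (8 : ℤ) from by ring, (hinit (4 : ℤ) (by norm_num) (by linarith)), (hinit (8 : ℤ) (by norm_num) (by linarith))] at hr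
    linarith [hr]
  have hQ15 : Q (N + 15) = N + 7 := by
    have hr := hrec (N + 15) (by linarith)
      (by rw [show (N:ℤ) + 15 - 1 = N + 14 from by ring, hQ14]; linarith)
      (by rw [show (N:ℤ) + 15 - 2 = N + 13 from by ring, hQ13]; linarith)
    rw [show (N:ℤ) + 15 - 1 = N + 14 from by ring, hQ14, show (N:ℤ) + 15 - 2 = N + 13 from by ring, hQ13, show (N:ℤ) + 15 - ((12 : ℤ)) = N + 3 from by ring, show (N:ℤ) + 15 - (N + 10) = (5 : ℤ) from by ring, hQ3, (hinit (5 : ℤ) (by norm_num) (by linarith))] at hr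
    linarith [hr]
  have hQ16 : Q (N + 16) = (14 : ℤ) := by
    have hr := hrec (N + 16) (by linarith)
      (by rw [show (N:ℤ) + 16 - 1 = N + 15 from by ring, hQ15]; linarith)
      (by rw [show (N:ℤ) + 16 - 2 = N + 14 from by ring, hQ14]; linarith)
    rw [show (N:ℤ) + 16 - 1 = N + 15 from by ring, hQ15, show (N:ℤ) + 16 - 2 = N + 14 from by ring, hQ14, show (N:ℤ) + 16 - (N + 7) = (9 : ℤ) from by ring, show (N:ℤ) + 16 - ((12 : ℤ)) = N + 4 from by ring, (hinit (9 : ℤ) (by norm_num) (by linarith)), hQ4] at hr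
    linarith [hr]
  have hQ17 : Q (N + 17) = N + 12 := by
    have hr := hrec (N + 17) (by linarith)
      (by rw [show (N:ℤ) + 17 - 1 = N + 16 from by ring, hQ16]; linarith)
      (by rw [show (N:ℤ) + 17 - 2 = N + 15 from by ring, hQ15]; linarith)
    rw [show (N:ℤ) + 17 - 1 = N + 16 from by ring, hQ16, show (N:ℤ) + 17 - 2 = N + 15 from by ring, hQ15, show (N:ℤ) + 17 - ((14 : ℤ)) = N + 3 from by ring, show (N:ℤ) + 17 - (N + 7) = (10 : ℤ) from by ring, hQ3, (hinit (10 : ℤ) (by norm_num) (by linarith))] at hr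
    linarith [hr]
  have hQ18 : Q (N + 18) = (11 : ℤ) := by
    have hr := hrec (N + 18) (by linarith)
      (by rw [show (N:ℤ) + 18 - 1 = N + 17 from by ring, hQ17]; linarith)
      (by rw [show (N:ℤ) + 18 - 2 = N + 16 from by ring, hQ16]; linarith)
    rw [show (N:ℤ) + 18 - 1 = N + 17 from by ring, hQ17, show (N:ℤ) + 18 - 2 = N + 16 from by ring, hQ16, show (N:ℤ) + 18 - (N + 12) = (6 : ℤ) from by ring, show (N:ℤ) + 18 - ((14 : ℤ)) = N + 4 from by ring, (hinit (6 : ℤ) (by norm_num) (by linarith)), hQ4] at hr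
    linarith [hr]
  have hQ19 : Q (N + 19) = N + 11 := by
    have hr := hrec (N + 19) (by linarith)
      (by rw [show (N:ℤ) + 19 - 1 = N + 18 from by ring, hQ18]; linarith)
      (by rw [show (N:ℤ) + 19 - 2 = N + 17 from by ring, hQ17]; linarith)
    rw [show (N:ℤ) + 19 - 1 = N + 18 from by ring, hQ18, show (N:ℤ) + 19 - 2 = N + 17 from by ring, hQ17, show (N:ℤ) + 19 - ((11 : ℤ)) = N + 8 from by ring, show (N:ℤ) + 19 - (N + 12) = (7 : ℤ) from by ring, hQ8, (hinit (7 : ℤ) (by norm_num) (by linarith))] at hr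
    linarith [hr]
  have hQ20 : Q (N + 20) = N + 15 := by
    have hr := hrec (N + 20) (by linarith)
      (by rw [show (N:ℤ) + 20 - 1 = N + 19 from by ring, hQ19]; linarith)
      (by rw [show (N:ℤ) + 20 - 2 = N + 18 from by ring, hQ18]; linarith)
    rw [show (N:ℤ) + 20 - 1 = N + 19 from by ring, hQ19, show (N:ℤ) + 20 - 2 = N + 18 from by ring, hQ18, show (N:ℤ) + 20 - (N + 11) = (9 : ℤ) from by ring, show (N:ℤ) + 20 - ((11 : ℤ)) = N + 9 from by ring, (hinit (9 : ℤ) (by norm_num) (by linarith)), hQ9] at hr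
    linarith [hr]
  have hQ21 : Q (N + 21) = (16 : ℤ) := by
    have hr := hrec (N + 21) (by linarith)
      (by rw [show (N:ℤ) + 21 - 1 = N + 20 from by ring, hQ20]; linarith)
      (by rw [show (N:ℤ) + 21 - 2 = N + 19 from by ring, hQ19]; linarith)
    rw [show (N:ℤ) + 21 - 1 = N + 20 from by ring, hQ20, show (N:ℤ) + 21 - 2 = N + 19 from by ring, hQ19, show (N:ℤ) + 21 - (N + 15) = (6 : ℤ) from by ring, show (N:ℤ) + 21 - (N + 11) = (10 : ℤ) from by ring, (hinit (6 : ℤ) (by norm_num) (by linarith)), (hinit (10 : ℤ) (by norm_num) (by linarith))] at hr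
    linarith [hr]
  have hQ22 : Q (N + 22) = (13 : ℤ) := by
    have hr := hrec (N + 22) (by linarith)
      (by rw [show (N:ℤ) + 22 - 1 = N + 21 from by ring, hQ21]; linarith)
      (by rw [show (N:ℤ) + 22 - 2 = N + 20 from by ring, hQ20]; linarith)
    rw [show (N:ℤ) + 22 - 1 = N + 21 from by ring, hQ21, show (N:ℤ) + 22 - 2 = N + 20 from by ring, hQ20, show (N:ℤ) + 22 - ((16 : ℤ)) = N + 6 from by ring, show (N:ℤ) + 22 - (N + 15) = (7 : ℤ) from by ring, hQ6, (hinit (7 : ℤ) (by norm_num) (by linarith))] at hr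
    linarith [hr]
  have hQ23 : Q (N + 23) = (17 : ℤ) := by
    have hr := hrec (N + 23) (by linarith)
      (by rw [show (N:ℤ) + 23 - 1 = N + 22 from by ring, hQ22]; linarith)
      (by rw [show (N:ℤ) + 23 - 2 = N + 21 from by ring, hQ21]; linarith)
    rw [show (N:ℤ) + 23 - 1 = N + 22 from by ring, hQ22, show (N:ℤ) + 23 - 2 = N + 21 from by ring, hQ21, show (N:ℤ) + 23 - ((13 : ℤ)) = N + 10 from by ring, show (N:ℤ) + 23 - ((16 : ℤ)) = N + 7 from by ring, hQ10, hQ7] at hr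
    linarith [hr]
  have hQ24 : Q (N + 24) = (15 : ℤ) := by
    have hr := hrec (N + 24) (by linarith)
      (by rw [show (N:ℤ) + 24 - 1 = N + 23 from by ring, hQ23]; linarith)
      (by rw [show (N:ℤ) + 24 - 2 = N + 22 from by ring, hQ22]; linarith)
    rw [show (N:ℤ) + 24 - 1 = N + 23 from by ring, hQ23, show (N:ℤ) + 24 - 2 = N + 22 from by ring, hQ22, show (N:ℤ) + 24 - ((17 : ℤ)) = N + 7 from by ring, show (N:ℤ) + 24 - ((13 : ℤ)) = N + 11 from by ring, hQ7, hQ11] at hr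
    linarith [hr]
  have hQ25 : Q (N + 25) = N + 14 := by
    have hr := hrec (N + 25) (by linarith)
      (by rw [show (N:ℤ) + 25 - 1 = N + 24 from by ring, hQ24]; linarith)
      (by rw [show (N:ℤ) + 25 - 2 = N + 23 from by ring, hQ23]; linarith)
    rw [show (N:ℤ) + 25 - 1 = N + 24 from by ring, hQ24, show (N:ℤ) + 25 - 2 = N + 23 from by ring, hQ23, show (N:ℤ) + 25 - ((15 : ℤ)) = N + 10 from by ring, show (N:ℤ) + 25 - ((17 : ℤ)) = N + 8 from by ring, hQ10, hQ8] at hr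
    linarith [hr]
  have hQ26 : Q (N + 26) = (20 : ℤ) := by
    have hr := hrec (N + 26) (by linarith)
      (by rw [show (N:ℤ) + 26 - 1 = N + 25 from by ring, hQ25]; linarith)
      (by rw [show (N:ℤ) + 26 - 2 = N + 24 from by ring, hQ24]; linarith)
    rw [show (N:ℤ) + 26 - 1 = N + 25 from by ring, hQ25, show (N:ℤ) + 26 - 2 = N + 24 from by ring, hQ24, show (N:ℤ) + 26 - (N + 14) = (12 : ℤ) from by ring, show (N:ℤ) + 26 - ((15 : ℤ)) = N + 11 from by ring, (hinit (12 : ℤ) (by norm_num) (by linarith)), hQ11] at hr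
    linarith [hr]
  have hQ27 : Q (N + 27) = (20 : ℤ) := by
    have hr := hrec (N + 27) (by linarith)
      (by rw [show (N:ℤ) + 27 - 1 = N + 26 from by ring, hQ26]; linarith)
      (by rw [show (N:ℤ) + 27 - 2 = N + 25 from by ring, hQ25]; linarith)
    rw [show (N:ℤ) + 27 - 1 = N + 26 from by ring, hQ26, show (N:ℤ) + 27 - 2 = N + 25 from by ring, hQ25, show (N:ℤ) + 27 - ((20 : ℤ)) = N + 7 from by ring, show (N:ℤ) + 27 - (N + 14) = (13 : ℤ) from by ring, hQ7, (hinit (13 : ℤ) (by norm_num) (by linarith))] at hr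
    linarith [hr]
  have hQ28 : Q (N + 28) = 2 * N + 8 := by
    have hr := hrec (N + 28) (by linarith)
      (by rw [show (N:ℤ) + 28 - 1 = N + 27 from by ring, hQ27]; linarith)
      (by rw [show (N:ℤ) + 28 - 2 = N + 26 from by ring, hQ26]; linarith)
    rw [show (N:ℤ) + 28 - 1 = N + 27 from by ring, hQ27, show (N:ℤ) + 28 - 2 = N + 26 from by ring, hQ26, show (N:ℤ) + 28 - ((20 : ℤ)) = N + 8 from by ring, hQ8] at hr
    linarith [hr]
  rw [hQ28]
  constructor <;> linarith
end

section
/- Let 14 ≤ N ≤ 20. If Q satisfies the Hofstadter Q-recurrence with initial condition Q(i) = i for 1 ≤ i ≤ N, then Q(N+29) = 27, Q(N+30) = 24, Q(N+31) = 12, Q(N+32) = 2N+19, and the sequence dies at index N+33 since N+33 - Q(N+32) ≤ 0. -/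
/-!
The recurrence determines `Q` index by index: up to any bound `M`, `Q` agrees with every `v` that
is the identity on `[1, N]` and satisfies the recurrence at each `n ∈ (N, M]` with both indices
`n - v (n - 1)`, `n - v (n - 2)` in `[1, n)`. The 32 terms after the initial block are affine
in `N`, and for each `N ∈ [14, 20]` evaluation confirms that they satisfy the recurrence.
Finally `Q (N + 32) = 2 * N + 19` sends the next index to `14 - N ≤ 0`.
-/

namespace HofstadterQ

def RecurrenceAt (v : ℤ → ℤ) (m : ℤ) : Prop :=
  1 ≤ m - v (m - 1) ∧ m - v (m - 1) < m ∧ 1 ≤ m - v (m - 2) ∧ m - v (m - 2) < m ∧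
    v m = v (m - v (m - 1)) + v (m - v (m - 2))

instance (v : ℤ → ℤ) (m : ℤ) : Decidable (RecurrenceAt v m) := by
  unfold RecurrenceAt; infer_instance

theorem eq_of_recurrenceAt {N M : ℤ} {Q v : ℤ → ℤ} (hN : 2 ≤ N)
    (hinit : ∀ i : ℤ, 1 ≤ i → i ≤ N → Q i = i)
    (hrec : ∀ n : ℤ, N < n → 1 ≤ n - Q (n - 1) → 1 ≤ n - Q (n - 2) →
      Q n = Q (n - Q (n - 1)) + Q (n - Q (n - 2)))
    (hv_init : ∀ i : ℤ, 1 ≤ i → i ≤ N → v i = i)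
    (hv : ∀ m, N < m → m ≤ M → RecurrenceAt v m) (m : ℤ) (hm₁ : 1 ≤ m) (hmM : m ≤ M) :
    Q m = v m := by
  induction m using Int.strongRec (m := 1) with
  | lt m hm => omega
  | ge m _ ih =>
    by_cases hmN : m ≤ N
    · rw [hinit m hm₁ hmN, hv_init m hm₁ hmN]
    obtain ⟨h₁, h₁', h₂, h₂', hvm⟩ := hv m (by omega) hmM
    have hQ₁ : Q (m - 1) = v (m - 1) := ih _ (by omega) (by omega) (by omega)
    have hQ₂ : Q (m - 2) = v (m - 2) := ih _ (by omega) (by omega) (by omega)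
    rw [hrec m (by omega) (by omega) (by omega), hQ₁, hQ₂, hvm,
      ih _ h₁' h₁ (by omega), ih _ h₂' h₂ (by omega)]

/-- `Q (N + k + 1)` for `k < 32`. -/
def tail (N : ℤ) : List ℤ :=
  [3, N + 1, N + 2, 5, N + 3, 6, 7, N + 4, N + 6, 10, 8, N + 6, N + 10, 12, N + 7, 14,
    N + 12, 11, N + 11, N + 15, 16, 13, 17, 15, N + 14, 20, 20, 2 * N + 8, 27, 24, 12, 2 * N + 19]

def table (N m : ℤ) : ℤ :=
  if m ≤ N then m else (tail N).getD (m - N - 1).toNat 0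

theorem recurrenceAt_table :
    ∀ N : ℤ, 14 ≤ N → N ≤ 20 → ∀ m, N < m → m ≤ N + 32 → RecurrenceAt (table N) m := by
  decide

end HofstadterQ

/-- For 14 ≤ N ≤ 20, Q(N+29)=27, Q(N+30)=24, Q(N+31)=12,
Q(N+32)=2N+19, and the sequence dies at index N+33. -/
theorem stmt_4 (N : ℤ) (hN1 : 14 ≤ N) (hN2 : N ≤ 20) (Q : ℤ → ℤ)
    (hinit : ∀ i : ℤ, 1 ≤ i → i ≤ N → Q i = i)
    (hrec : ∀ n : ℤ, N < n → 1 ≤ n - Q (n - 1) → 1 ≤ n - Q (n - 2) →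
      Q n = Q (n - Q (n - 1)) + Q (n - Q (n - 2))) :
    Q (N + 29) = 27 ∧ Q (N + 30) = 24 ∧ Q (N + 31) = 12 ∧
      Q (N + 32) = 2 * N + 19 ∧ (N + 33) - Q (N + 32) ≤ 0 := by
  have hQ (m : ℤ) (hm₁ : 1 ≤ m) (hm : m ≤ N + 32) : Q m = HofstadterQ.table N m :=
    HofstadterQ.eq_of_recurrenceAt (by omega) hinit hrec (fun _ _ hi ↦ if_pos hi)
      (HofstadterQ.recurrenceAt_table N hN1 hN2) m hm₁ hm
  have h32 : Q (N + 32) = 2 * N + 19 := by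
    rw [hQ _ (by omega) le_rfl]
    simp [HofstadterQ.table, HofstadterQ.tail]
  refine ⟨?_, ?_, ?_, h32, by omega⟩ <;> rw [hQ _ (by omega) (by omega)] <;>
    simp [HofstadterQ.table, HofstadterQ.tail]
end

section
/- Let N be a positive integer and define A₀ = N−2, A₁ = 2N+4, B₁ = −11N−22, A_{i+1} = A_i·((A_i − A_{i−1}+2)/5) + B_i, B_{i+1} = A_{i+1} − A_i, C_i = (A_i + 2i + 1) mod 5. Let j = j(N) be the least index with C_j ≠ 1. Then for all 1 ≤ i ≤ j, A_i(N + 5ʲ) ≡ A_i(N) (mod 5^{j−i+1}). -/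
/-- The sequence A_i(N): A₀ = N−2, A₁ = 2N+4,
A₂ = A₁·((A₁−A₀+2)/5) + B₁ with B₁ = −11N−22, and for i ≥ 2,
A_{i+1} = A_i·((A_i−A_{i−1}+2)/5) + B_i with B_i = A_i − A_{i−1}. -/
noncomputable def hofA (N : ℚ) : ℕ → ℚ
  | 0 => N - 2
  | 1 => 2 * N + 4
  | 2 => (2 * N + 4) * (((2 * N + 4) - (N - 2) + 2) / 5) + (-11 * N - 22)
  | (i + 3) => hofA N (i + 2) * ((hofA N (i + 2) - hofA N (i + 1) + 2) / 5)
      + (hofA N (i + 2) - hofA N (i + 1))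

/-- C_i(N) = (A_i + 2i + 1) mod 5 (A_i is an integer whenever this is used). -/
noncomputable def hofC (N : ℚ) (i : ℕ) : ℤ := (⌊hofA N i⌋ + 2 * i + 1) % 5

/-- Proposition j5p: if j = j(N) is the least index with
C_j(N) ≠ 1, then for all 1 ≤ i ≤ j, A_i(N+5ʲ) ≡ A_i(N) (mod 5^{j−i+1}). -/
theorem stmt_13 (N : ℤ) (hN : 0 < N) (j : ℕ) (hj : 1 ≤ j)
    (hjlt : ∀ i : ℕ, 1 ≤ i → i < j → hofC (N : ℚ) i = 1)
    (hjne : hofC (N : ℚ) j ≠ 1) :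
    ∀ i : ℕ, 1 ≤ i → i ≤ j →
      ∃ c : ℤ, hofA ((N : ℚ) + 5 ^ j) i - hofA (N : ℚ) i =
        (5 : ℚ) ^ (j - i + 1) * c := by
  -- residues: for 1 ≤ i < j, if A_i(N) is the integer a, then (a+2i+1) % 5 = 1
  have hres : ∀ i : ℕ, 1 ≤ i → i < j → ∀ a : ℤ, hofA (N : ℚ) i = (a : ℚ) →
      (a + 2 * (i : ℤ) + 1) % 5 = 1 := by
    intro i h1 h2 a ha
    have h := hjlt i h1 h2
    rw [hofC, ha, Int.floor_intCast] at h
    exact_mod_cast h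
  -- main claim by strong induction
  have key : ∀ i : ℕ, i ≤ j → ∃ a b : ℤ, hofA (N : ℚ) i = (a : ℚ) ∧
      hofA ((N : ℚ) + 5 ^ j) i = (b : ℚ) ∧
      (5 : ℤ) ^ (j - max i 1 + 1) ∣ (b - a) := by
    intro i
    induction i using Nat.strong_induction_on with
    | _ i ih =>
      intro hij
      match i, hij, ih with
      | 0, hij, _ =>
        refine ⟨N - 2, N - 2 + 5 ^ j, ?_, ?_, ?_⟩
        · simp only [hofA]; push_cast; ring
        · simp only [hofA]; push_cast; ring
        · have hmax : max 0 1 = 1 := rfl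
          have hje : j - 1 + 1 = j := by omega
          rw [hmax, hje]
          refine ⟨1, by ring⟩
      | 1, hij, _ =>
        refine ⟨2 * N + 4, 2 * N + 4 + 2 * 5 ^ j, ?_, ?_, ?_⟩
        · simp only [hofA]; push_cast; ring
        · simp only [hofA]; push_cast; ring
        · have hmax : max 1 1 = 1 := rfl
          have hje : j - 1 + 1 = j := by omega
          rw [hmax, hje]
          refine ⟨2, by ring⟩
      | 2, hij, _ =>
        have h2j : 2 ≤ j := hij
        have ha1 : hofA (N : ℚ) 1 = ((2 * N + 4 : ℤ) : ℚ) := by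
          simp only [hofA]; push_cast; ring
        have hr1 := hres 1 le_rfl (by omega) (2 * N + 4) ha1
        push_cast at hr1
        have h5 : (5 : ℤ) ∣ N + 8 := by omega
        obtain ⟨t, ht⟩ := h5
        have hpw : (5 : ℤ) ^ j = 5 * 5 ^ (j - 1) := by
          rw [← pow_succ']
          congr 1
          omega
        refine ⟨(2 * N + 4) * t + (-11 * N - 22),
          (2 * (N + 5 ^ j) + 4) * (t + 5 ^ (j - 1)) + (-11 * (N + 5 ^ j) - 22),
          ?_, ?_, ?_⟩
        · have htQ : ((N : ℚ) + 8) = 5 * (t : ℚ) := by exact_mod_cast ht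
          simp only [hofA]
          push_cast
          field_simp
          linear_combination (2 * (N : ℚ) + 4) * htQ
        · have htQ' : ((N : ℚ) + (5 : ℚ) ^ j + 8) = 5 * ((t : ℚ) + (5 : ℚ) ^ (j - 1)) := by
            have h1 : ((N : ℚ) + 8) = 5 * (t : ℚ) := by exact_mod_cast ht
            have h2 : ((5 : ℚ) ^ j) = 5 * 5 ^ (j - 1) := by exact_mod_cast hpw
            linarith
          simp only [hofA]
          push_cast
          field_simp
          linear_combination (2 * ((N : ℚ) + 5 ^ j) + 4) * htQ'
        · have hmax : max 2 1 = 2 := rfl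
          have hje : j - 2 + 1 = j - 1 := by omega
          rw [hmax, hje]
          refine ⟨10 * t + 2 * N - 51 + 2 * 5 ^ j, ?_⟩
          rw [hpw]
          ring
      | (k + 3), hij, ih =>
        obtain ⟨a, b, ha, hb, hdvd1⟩ := ih (k + 2) (by omega) (by omega)
        obtain ⟨q, q', hq, hq', hdvd2⟩ := ih (k + 1) (by omega) (by omega)
        have hm1 : j - max (k + 2) 1 + 1 = j - k - 1 := by
          rw [Nat.max_eq_left (by omega)]; omega
        have hm2 : j - max (k + 1) 1 + 1 = j - k := by
          rw [Nat.max_eq_left (by omega)]; omega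
        rw [hm1] at hdvd1
        rw [hm2] at hdvd2
        have E2 : (5 : ℤ) ^ (j - k - 1) = 5 * 5 ^ (j - k - 2) := by
          rw [← pow_succ']; congr 1; omega
        have E3 : (5 : ℤ) ^ (j - k) = 25 * 5 ^ (j - k - 2) := by
          rw [show (25 : ℤ) = 5 * 5 from rfl, mul_assoc, ← E2, ← pow_succ']
          congr 1; omega
        obtain ⟨d, hd⟩ := hdvd1
        obtain ⟨e, he⟩ := hdvd2
        rw [E2] at hd
        rw [E3] at he
        -- residues at k+2 and k+1
        have ra := hres (k + 2) (by omega) (by omega) a ha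
        have rq := hres (k + 1) (by omega) (by omega) q hq
        push_cast at ra rq
        have h5aq : (5 : ℤ) ∣ (a - q + 2) := by omega
        obtain ⟨u, hu⟩ := h5aq
        obtain rfl : b = a + 5 * 5 ^ (j - k - 2) * d := by linarith
        obtain rfl : q' = q + 25 * 5 ^ (j - k - 2) * e := by linarith
        obtain rfl : a = q - 2 + 5 * u := by linarith
        set X : ℤ := 5 ^ (j - k - 2) with hX
        refine ⟨(q - 2 + 5 * u) * u + ((q - 2 + 5 * u) - q),
          (q - 2 + 5 * u + 5 * X * d) * (u + X * d - 5 * X * e) +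
            ((q - 2 + 5 * u + 5 * X * d) - (q + 25 * X * e)), ?_, ?_, ?_⟩
        · simp only [hofA]
          rw [ha, hq]
          have huQ : (((q : ℤ) - 2 + 5 * u : ℤ) : ℚ) - (q : ℚ) + 2 = 5 * (u : ℚ) := by
            push_cast; ring
          rw [huQ]
          push_cast
          field_simp
        · simp only [hofA]
          rw [hb, hq']
          have hvQ : (((q : ℤ) - 2 + 5 * u + 5 * X * d : ℤ) : ℚ) -
              ((q + 25 * X * e : ℤ) : ℚ) + 2 = 5 * (((u + X * d - 5 * X * e : ℤ)) : ℚ) := by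
            push_cast; ring
          rw [hvQ]
          push_cast
          field_simp
        · have hmax : max (k + 3) 1 = k + 3 := Nat.max_eq_left (by omega)
          have hje : j - (k + 3) + 1 = j - k - 2 := by omega
          rw [hmax, hje, ← hX]
          refine ⟨d * ((q - 2 + 5 * u) + (q - 2 + 5 * u + 5 * X * d) + 2 -
            (q + 25 * X * e)) - 5 * (q - 2 + 5 * u) * e + 5 * d - 25 * e, ?_⟩
          ring
  -- conclude
  intro i hi1 hij
  obtain ⟨a, b, ha, hb, hdvd⟩ := key i hij
  rw [Nat.max_eq_left hi1] at hdvd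
  obtain ⟨c, hc⟩ := hdvd
  refine ⟨c, ?_⟩
  rw [ha, hb]
  exact_mod_cast hc
end
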